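/- Let L be a color gLt-algebra admitting a multiplicative basis {e_i}_{i∈I} (i.e. a quasi-multiplicative basis with V = 0, so for all i₁,…,iₙ ∈ I one has ⟨e_{i₁},…,e_{iₙ}⟩ ∈ 𝔽e_j for some j ∈ I). Then L = ⊕_{[i]∈I/∼} 𝔍_{[i]}, a direct sum of the color gLt-ideals 𝔍_{[i]} = ⊕_{j∈[i]} 𝔽e_j, each admitting a multiplicative basis inherited from that of L. -/

import Mathlib

set_option maxHeartbeats 1000000

/-- A (color) generalized Lie-type algebra: an `(n+2)`-ary `G`-graded algebra with
bicharacter `epsilon` satisfying the (colored) generalized Lie-type identities with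
structure constants `alpha` (allowed to depend on the degrees of the arguments). -/
structure ColorGLT (F : Type) [Field F] (G : Type) [AddCommGroup G] [DecidableEq G]
    (L : Type) [AddCommGroup L] [Module F L] (n : ℕ) where
  bracket : MultilinearMap F (fun _ : Fin (n + 2) => L) L
  grading : G → Submodule F L
  isInternal : DirectSum.IsInternal grading
  bracket_graded : ∀ (g : Fin (n + 2) → G) (x : Fin (n + 2) → L),
    (∀ t, x t ∈ grading (g t)) → bracket x ∈ grading (∑ t, g t)
  epsilon : G → G → F
  epsilon_ne_zero : ∀ g h, epsilon g h ≠ 0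
  epsilon_add_left : ∀ g h k, epsilon (g + h) k = epsilon g k * epsilon h k
  epsilon_add_right : ∀ g h k, epsilon k (g + h) = epsilon k g * epsilon k h
  epsilon_skew : ∀ g h, epsilon g h * epsilon h g = 1
  alpha : Fin (n + 2) → Fin (n + 2) → Fin (n + 2) → Equiv.Perm (Fin (n + 2)) →
      Equiv.Perm (Fin (n + 1)) → (Fin (n + 2) → G) → (Fin (n + 1) → G) → F
  glt : ∀ (k : Fin (n + 2)) (gx : Fin (n + 2) → G) (gy : Fin (n + 1) → G)
      (x : Fin (n + 2) → L) (y : Fin (n + 1) → L),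
      (∀ t, x t ∈ grading (gx t)) → (∀ t, y t ∈ grading (gy t)) →
      bracket (Fin.insertNth k (bracket x) y) =
        ∑ i : Fin (n + 2), ∑ j : Fin (n + 2), ∑ σ₁ : Equiv.Perm (Fin (n + 2)),
          ∑ σ₂ : Equiv.Perm (Fin (n + 1)),
            alpha i j k σ₁ σ₂ gx gy •
              bracket (Function.update (fun t => x (σ₁ t)) i
                (bracket (Fin.insertNth j (x (σ₁ i)) (fun t => y (σ₂ t)))))

namespace ColorGLT

variable {F : Type} [Field F] {G : Type} [AddCommGroup G] [DecidableEq G]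
    {L : Type} [AddCommGroup L] [Module F L] {n : ℕ}

/-- A color gLt-ideal: a graded subspace `S` with `⟨S, L, …, L⟩_σ ⊆ S` for all `σ ∈ Sₙ`. -/
def IsIdeal (A : ColorGLT F G L n) (S : Submodule F L) : Prop :=
  (S = ⨆ g : G, S ⊓ A.grading g) ∧
  ∀ (σ : Equiv.Perm (Fin (n + 2))) (x : Fin (n + 2) → L),
    x 0 ∈ S → A.bracket (fun t => x (σ t)) ∈ S

/-- `L` is centerless: `Z(L) = {x : ⟨x, L, …, L⟩_σ = 0 ∀ σ} = 0`. -/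
def Centerless (A : ColorGLT F G L n) : Prop :=
  ∀ x : L, (∀ (σ : Equiv.Perm (Fin (n + 2))) (y : Fin (n + 2) → L),
    y 0 = x → A.bracket (fun t => y (σ t)) = 0) → x = 0

end ColorGLT

/-- A quasi-multiplicative basis of a color gLt-algebra: `L = V ⊕ W`, with a homogeneous
basis `{e i}` of `W ≠ 0` satisfying the three quasi-multiplicativity conditions. -/
structure QMBasis {F : Type} [Field F] {G : Type} [AddCommGroup G] [DecidableEq G]
    {L : Type} [AddCommGroup L] [Module F L] {n : ℕ}
    (A : ColorGLT F G L n) (I : Type) where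
  V : Submodule F L
  W : Submodule F L
  compl : IsCompl V W
  W_ne_bot : W ≠ ⊥
  V_graded : V = ⨆ g : G, V ⊓ A.grading g
  W_graded : W = ⨆ g : G, W ⊓ A.grading g
  e : I → L
  deg : I → G
  e_homog : ∀ i, e i ∈ A.grading (deg i)
  e_indep : LinearIndependent F e
  e_span : Submodule.span F (Set.range e) = W
  qm1 : ∀ c : Fin (n + 2) → I,
    (∃ j, A.bracket (fun t => e (c t)) ∈ Submodule.span F {e j}) ∨
      A.bracket (fun t => e (c t)) ∈ V
  qm2 : ∀ (σ : Equiv.Perm (Fin (n + 2))) (S : Finset (Fin (n + 2))),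
    S.Nonempty → S ≠ Finset.univ → ∀ ind : Fin (n + 2) → I, ∃ j : I,
      ∀ x : Fin (n + 2) → L, (∀ t, t ∈ S → x t = e (ind t)) →
        (∀ t, t ∉ S → x t ∈ V) →
        A.bracket (fun t => x (σ t)) ∈ Submodule.span F {e j}
  qm3 : (∃ j, ∀ x : Fin (n + 2) → L, (∀ t, x t ∈ V) →
          A.bracket x ∈ Submodule.span F {e j}) ∨
        (∀ x : Fin (n + 2) → L, (∀ t, x t ∈ V) → A.bracket x ∈ V)

namespace QMBasis

variable {F : Type} [Field F] {G : Type} [AddCommGroup G] [DecidableEq G]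
    {L : Type} [AddCommGroup L] [Module F L] {n : ℕ} {I : Type}
    {A : ColorGLT F G L n}

/-- The set of elements represented by an index of `𝔉 = I ∪ {v}`: `e i` for `some i`,
the subspace `V` for `none` (= `v`). -/
def elemSet (B : QMBasis A I) : Option I → Set L
  | none => (B.V : Set L)
  | some i => {B.e i}

/-- The target set of an index of `𝔉`: the line `𝔽 e j` for `some j`, `V` for `v`. -/
def targetSet (B : QMBasis A I) : Option I → Set L
  | none => (B.V : Set L)
  | some j => (Submodule.span F {B.e j} : Set L)

/-- `x ∈ a_σ(c)`: the `σ`-permuted product of the elements represented by `c` is nonzero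
and lands in the target represented by `x`; the value `v` is only allowed for all-basis
or all-`V` tuples. -/
def aMem (B : QMBasis A I) (σ : Equiv.Perm (Fin (n + 2)))
    (c : Fin (n + 2) → Option I) (x : Option I) : Prop :=
  (∃ z : Fin (n + 2) → L, (∀ t, z t ∈ B.elemSet (c (σ t))) ∧ A.bracket z ≠ 0) ∧
  (∀ z : Fin (n + 2) → L, (∀ t, z t ∈ B.elemSet (c (σ t))) → A.bracket z ∈ B.targetSet x) ∧
  (x = none → ((∀ t, (c t).isSome = true) ∨ (∀ t, c t = none)))

/-- An admissible `(n+1)`-tuple over `𝔉 ∪ 𝔉̄`: all entries barred (`true`) or all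
unbarred (`false`). -/
abbrev Tup (I : Type) (n : ℕ) := Bool × (Fin (n + 1) → Option I)

/-- `x ∈ μ(j, X)` where `j ∈ 𝔉 ∪ 𝔉̄` (left = unbarred, right = barred) and `X` is an
admissible tuple; defined via `a_σ` and `b_σ` as in the paper. -/
def muMem (B : QMBasis A I) :
    Option I ⊕ Option I → Tup I n → Option I → Prop
  | Sum.inl j, (false, c), x => ∃ σ : Equiv.Perm (Fin (n + 2)), B.aMem σ (Fin.cons j c) x
  | Sum.inl j, (true, c), x => ∃ σ : Equiv.Perm (Fin (n + 2)), B.aMem σ (Fin.cons x c) j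
  | Sum.inr j, (false, c), x =>
      ∃ (k : Fin (n + 1)) (σ : Equiv.Perm (Fin (n + 2))),
        B.aMem σ (Fin.cons x (Fin.cons j (fun t => c (k.succAbove t)))) (c k)
  | Sum.inr _, (true, _), _ => False

/-- The map `φ : P(I ∪ Ī) × T → P(I ∪ Ī)`, `φ(J, X) = K ∪ K̄` with
`K = (⋃_{j ∈ J} μ(j, X)) \ {v}` (left = `I`, right = `Ī`). -/
def phi (B : QMBasis A I) (J : Set (I ⊕ I)) (X : Tup I n) : Set (I ⊕ I) :=
  {p | ∃ i : I, (p = Sum.inl i ∨ p = Sum.inr i) ∧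
    ∃ j ∈ J, B.muMem (Sum.map some some j) X (some i)}

/-- Iterated application of `φ` along a list of tuples. -/
def chain (B : QMBasis A I) : Set (I ⊕ I) → List (Tup I n) → Set (I ⊕ I)
  | s, [] => s
  | s, X :: r => chain B (B.phi s X) r

/-- The connection relation: `i` is connected to `j`. -/
def Connected (B : QMBasis A I) (i j : I) : Prop :=
  i = j ∨ ∃ (Xs : List (Tup I n)) (st : I ⊕ I),
    Xs ≠ [] ∧ (st = Sum.inl i ∨ st = Sum.inr i) ∧
    (∀ m, m < Xs.length → (chain B {st} (List.take m Xs)).Nonempty) ∧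
    Sum.inl j ∈ chain B {st} Xs

/-- The connection class `[i]` of `i`. -/
def cls (B : QMBasis A I) (i : I) : Set I := {j | B.Connected i j}

/-- `W_{[i]} = ⊕_{j ∈ [i]} 𝔽 e_j`. -/
def Wcls (B : QMBasis A I) (i : I) : Submodule F L :=
  Submodule.span F (B.e '' B.cls i)

/-- `V_{[i]} = (Σ_{i₁,…,iₙ ∈ [i]} 𝔽⟨e_{i₁},…,e_{iₙ}⟩) ∩ V`. -/
def Vcls (B : QMBasis A I) (i : I) : Submodule F L :=
  Submodule.span F {z : L | ∃ c : Fin (n + 2) → I,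
    (∀ t, c t ∈ B.cls i) ∧ z = A.bracket (fun t => B.e (c t))} ⊓ B.V

/-- `𝔍_{[i]} = V_{[i]} ⊕ W_{[i]}`. -/
def Jcls (B : QMBasis A I) (i : I) : Submodule F L := B.Vcls i ⊔ B.Wcls i

/-- `S` admits a quasi-multiplicative basis inherited from that of `L`:
`S = V_S ⊕ W_S` with `V_S ⊆ V` and `W_S ≠ 0` spanned by a subset of the `e i`. -/
def HasInheritedBasis (B : QMBasis A I) (S : Submodule F L) : Prop :=
  ∃ (V' : Submodule F L) (J' : Set I), V' ≤ B.V ∧ J'.Nonempty ∧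
    S = V' ⊔ Submodule.span F (B.e '' J')

/-- `V` is tight: `V = 0` or `V = Σ_{μ(i₁,…,iₙ) = {v}} 𝔽⟨e_{i₁},…,e_{iₙ}⟩`. -/
def Tight (B : QMBasis A I) : Prop :=
  B.V = ⊥ ∨
    B.V = Submodule.span F {z : L | ∃ c : Fin (n + 2) → I,
      ({x : Option I | ∃ σ, B.aMem σ (fun t => some (c t)) x} = {none}) ∧
      z = A.bracket (fun t => B.e (c t))}

/-- The set of elements represented by `u_{k}`: `u_k = e_k + e_{k̄}` (`= e` of the
underlying index, since `e_{j̄} = 0`) if `k ∉ {v, v̄}`, and `u_k = V` otherwise. -/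
def uSet (B : QMBasis A I) : Option I ⊕ Option I → Set L
  | Sum.inl none => (B.V : Set L)
  | Sum.inr none => (B.V : Set L)
  | Sum.inl (some i) => {B.e i}
  | Sum.inr (some i) => {B.e i}

/-- The full `(n+2)`-tuple `(k₁, …, kₙ)` over `𝔉 ∪ 𝔉̄` obtained from a first entry and
an admissible tuple. -/
def fullTup {I : Type} {n : ℕ} (k₁ : Option I ⊕ Option I) (X : Tup I n) :
    Fin (n + 2) → Option I ⊕ Option I :=
  Fin.cons k₁ (fun t => if X.1 then Sum.inr (X.2 t) else Sum.inl (X.2 t))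

/-- The basis is `μ`-quasi-multiplicative: whenever `i ∈ μ(k₁, …, kₙ)` then
`e i ∈ 𝔽⟨u_{k₁}, …, u_{kₙ}⟩_σ` for some `σ ∈ Sₙ`. -/
def MuQM (B : QMBasis A I) : Prop :=
  ∀ (k₁ : Option I ⊕ Option I) (X : Tup I n) (i : I),
    B.muMem k₁ X (some i) →
    ∃ (σ : Equiv.Perm (Fin (n + 2))) (z : Fin (n + 2) → L),
      (∀ t, z t ∈ B.uSet (fullTup k₁ X (σ t))) ∧
      B.e i ∈ Submodule.span F {A.bracket z}

end QMBasis
/-!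
When `V = 0`, `𝔍_{[i]}` is the span of the `e j` with `j ∈ [i]`. The connection relation is
the reflexive-transitive closure of a one-step adjacency read off from `φ`, and adjacency is
symmetric: a product relation `⟨e_a, …⟩ ∈ 𝔽 e_b` can be read backwards (by barring the
output, or by swapping the first two slots). Hence the classes partition `I`, and linear
independence of the basis makes the spans independent. A product with one factor in
`𝔍_{[i]}` is, by multilinearity, a combination of products of basis vectors; each of these
is `0` or spans some `𝔽 e_j`, and then `j` is adjacent to the index of that factor, so
`j ∈ [i]`.
-/

theorem MultilinearMap.map_mem_of_forall_mem_span {R ι N : Type*} {M : ι → Type*}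
    [CommSemiring R] [Fintype ι] [DecidableEq ι] [∀ i, AddCommMonoid (M i)]
    [∀ i, Module R (M i)] [AddCommMonoid N] [Module R N] (f : MultilinearMap R M N)
    {s : ∀ i, Set (M i)} {Q : Submodule R N} (hf : ∀ z, (∀ i, z i ∈ s i) → f z ∈ Q)
    {z : ∀ i, M i} (hz : ∀ i, z i ∈ Submodule.span R (s i)) : f z ∈ Q := by
  suffices ∀ S : Finset ι, ∀ z : ∀ i, M i, (∀ i, z i ∈ Submodule.span R (s i)) →
      (∀ i ∉ S, z i ∈ s i) → f z ∈ Q from this Finset.univ z hz (by simp)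
  intro S
  induction S using Finset.induction_on with
  | empty => exact fun z _ hs => hf z fun i => hs i (Finset.notMem_empty i)
  | insert a S ha ih =>
    intro z hz hs
    have key : ∀ y ∈ Submodule.span R (s a), f (Function.update z a y) ∈ Q := by
      intro y hy
      induction hy using Submodule.span_induction with
      | mem y hy =>
        refine ih _ (fun i => ?_) (fun i hi => ?_)
        · rcases eq_or_ne i a with rfl | hia
          · simpa using Submodule.subset_span hy
          · simpa [hia] using hz i
        · rcases eq_or_ne i a with rfl | hia
          · simpa using hy
          · simpa [hia] using hs i (by simp [hia, hi])
      | zero => simp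
      | add x y _ _ hx hy => rw [f.map_update_add]; exact add_mem hx hy
      | smul r x _ hx => rw [f.map_update_smul]; exact Q.smul_mem r hx
    simpa using key (z a) (hz a)

theorem Submodule.span_eq_iSup_inf_of_forall_exists_mem {R M ι : Type*} [Semiring R]
    [AddCommMonoid M] [Module R M] (p : ι → Submodule R M) {s : Set M}
    (hs : ∀ x ∈ s, ∃ i, x ∈ p i) : span R s = ⨆ i, span R s ⊓ p i := by
  refine le_antisymm (span_le.2 fun x hx => ?_) (iSup_le fun _ => inf_le_left)
  obtain ⟨i, hi⟩ := hs x hx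
  exact mem_iSup_of_mem i ⟨subset_span hx, hi⟩

theorem Sum.elim_id_id_eq_iff {α : Type*} {p : α ⊕ α} {a : α} :
    Sum.elim id id p = a ↔ p = .inl a ∨ p = .inr a := by
  cases p <;> simp

namespace QMBasis

variable {F : Type} [Field F] {G : Type} [AddCommGroup G] [DecidableEq G]
    {L : Type} [AddCommGroup L] [Module F L] {n : ℕ} {I : Type}
    {A : ColorGLT F G L n} (B : QMBasis A I)

theorem aMem_comp_perm {σ : Equiv.Perm (Fin (n + 2))} {c : Fin (n + 2) → Option I}
    {x : Option I} (h : B.aMem σ c x) (π : Equiv.Perm (Fin (n + 2))) :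
    B.aMem (σ.trans π.symm) (c ∘ π) x := by
  obtain ⟨⟨z, hz, hz0⟩, hmem, hnone⟩ := h
  refine ⟨⟨z, fun t => ?_, hz0⟩, fun z' hz' => hmem z' fun t => ?_, fun hx => ?_⟩
  · simpa using hz t
  · simpa using hz' t
  · exact (hnone hx).imp (fun h t => h (π t)) (fun h t => h (π t))

/-- `p` ranges over `a` and its barred copy `ā`. -/
def Adjacent (a b : I) : Prop :=
  ∃ (p : I ⊕ I) (X : Tup I n), Sum.elim id id p = a ∧ B.muMem (Sum.map some some p) X (some b)

theorem adjacent_of_aMem {σ : Equiv.Perm (Fin (n + 2))} {d : Fin (n + 2) → Option I} {b : I}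
    (h : B.aMem σ d (some b)) {t₀ : Fin (n + 2)} {a : I} (ha : d t₀ = some a) :
    B.Adjacent a b := by
  have h' := B.aMem_comp_perm h (Equiv.swap 0 t₀)
  rw [← Fin.cons_self_tail (d ∘ Equiv.swap 0 t₀)] at h'
  simp only [Function.comp_apply, Equiv.swap_apply_left, ha] at h'
  exact ⟨.inl a, (false, _), rfl, _, h'⟩

theorem adjacent_symm {a b : I} (h : B.Adjacent a b) : B.Adjacent b a := by
  obtain ⟨p | p, ⟨_ | _, c⟩, rfl, h⟩ := h
  · exact ⟨.inl b, (true, c), rfl, h⟩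
  · exact ⟨.inl b, (false, c), rfl, h⟩
  · obtain ⟨k, σ, hk⟩ := h
    refine ⟨.inr b, (false, Fin.cons (c k) (c ∘ k.succAbove)), rfl, 0,
      σ.trans (Equiv.swap 0 1).symm, ?_⟩
    have hswap : (Fin.cons (some b) (Fin.cons (some p) fun t => c (k.succAbove t)) :
        Fin (n + 2) → Option I) ∘ Equiv.swap 0 1 =
          Fin.cons (some p) (Fin.cons (some b) fun t => c (k.succAbove t)) :=
      Matrix.cons_cons_comp_swap_zero_one _ _ _
    simpa [hswap] using B.aMem_comp_perm hk (Equiv.swap 0 1)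
  · exact h.elim

theorem mem_phi {J : Set (I ⊕ I)} {X : Tup I n} {q : I ⊕ I} :
    q ∈ B.phi J X ↔ ∃ p ∈ J, B.muMem (Sum.map some some p) X (some (Sum.elim id id q)) := by
  constructor
  · rintro ⟨i, rfl | rfl, h⟩ <;> exact h
  · exact fun h => ⟨_, Sum.elim_id_id_eq_iff.1 rfl, h⟩

theorem chain_eq_foldl (s : Set (I ⊕ I)) (l : List (Tup I n)) :
    B.chain s l = l.foldl B.phi s := by
  induction l generalizing s with
  | nil => rfl
  | cons X l ih => exact ih _

theorem chain_append (s : Set (I ⊕ I)) (l r : List (Tup I n)) :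
    B.chain s (l ++ r) = B.chain (B.chain s l) r := by
  simp only [chain_eq_foldl, List.foldl_append]

theorem chain_empty (l : List (Tup I n)) : B.chain ∅ l = ∅ := by
  induction l with
  | nil => rfl
  | cons X l ih =>
    have : B.phi ∅ X = ∅ := by ext; simp [phi]
    simpa [chain, this] using ih

theorem chain_mono {s s' : Set (I ⊕ I)} (h : s ⊆ s') (l : List (Tup I n)) :
    B.chain s l ⊆ B.chain s' l := by
  induction l generalizing s s' with
  | nil => exact h
  | cons X l ih =>
    refine ih fun q hq => ?_
    obtain ⟨p, hp, hpq⟩ := B.mem_phi.1 hq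
    exact B.mem_phi.2 ⟨p, h hp, hpq⟩

theorem nonempty_chain_take {s : Set (I ⊕ I)} {l : List (Tup I n)} (h : (B.chain s l).Nonempty)
    (m : ℕ) : (B.chain s (l.take m)).Nonempty := by
  rw [← List.take_append_drop m l, chain_append] at h
  by_contra hm
  rw [Set.not_nonempty_iff_eq_empty] at hm
  simp [hm, chain_empty] at h

theorem transGen_of_mem_chain {p x : I ⊕ I} {l : List (Tup I n)} (hl : l ≠ [])
    (hx : x ∈ B.chain {p} l) :
    Relation.TransGen B.Adjacent (Sum.elim id id p) (Sum.elim id id x) := by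
  induction l using List.reverseRecOn generalizing x with
  | nil => exact absurd rfl hl
  | append_singleton l X ih =>
    rw [chain_append] at hx
    obtain ⟨q, hq, hqx⟩ := B.mem_phi.1 hx
    have hstep : B.Adjacent (Sum.elim id id q) (Sum.elim id id x) := ⟨q, X, rfl, hqx⟩
    rcases eq_or_ne l [] with rfl | hl'
    · rw [show q = p from hq] at hstep
      exact .single hstep
    · exact (ih hl' hq).tail hstep

theorem exists_mem_chain_of_transGen {a b : I} (h : Relation.TransGen B.Adjacent a b) :
    ∃ (l : List (Tup I n)) (st : I ⊕ I),
      l ≠ [] ∧ Sum.elim id id st = a ∧ Sum.inl b ∈ B.chain {st} l := by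
  induction h using Relation.TransGen.head_induction_on with
  | single hab =>
    obtain ⟨p, X, hp, h⟩ := hab
    exact ⟨[X], p, by simp, hp, B.mem_phi.2 ⟨p, rfl, h⟩⟩
  | head hab _ ih =>
    obtain ⟨p, X, hp, h⟩ := hab
    obtain ⟨l, st, -, hst, hmem⟩ := ih
    have hst' : st ∈ B.phi {p} X := B.mem_phi.2 ⟨p, rfl, hst ▸ h⟩
    exact ⟨X :: l, p, by simp, hp, B.chain_mono (Set.singleton_subset_iff.2 hst') l hmem⟩

theorem connected_iff_reflTransGen {i j : I} :
    B.Connected i j ↔ Relation.ReflTransGen B.Adjacent i j := by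
  rw [Relation.reflTransGen_iff_eq_or_transGen, eq_comm]
  refine or_congr_right ⟨?_, fun h => ?_⟩
  · rintro ⟨l, st, hl, hst, -, hj⟩
    simpa [← Sum.elim_id_id_eq_iff.2 hst] using B.transGen_of_mem_chain hl hj
  · obtain ⟨l, st, hl, hst, hj⟩ := B.exists_mem_chain_of_transGen h
    exact ⟨l, st, hl, Sum.elim_id_id_eq_iff.1 hst, fun m _ => B.nonempty_chain_take ⟨_, hj⟩ m, hj⟩

theorem connected_equivalence : Equivalence B.Connected where
  refl _ := Or.inl rfl
  symm h := by
    rw [connected_iff_reflTransGen] at h ⊢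
    induction h with
    | refl => rfl
    | tail _ hbc ih => exact ih.head (B.adjacent_symm hbc)
  trans h₁ h₂ := by
    rw [connected_iff_reflTransGen] at h₁ h₂ ⊢
    exact h₁.trans h₂

theorem iSup_Wcls : ⨆ i, B.Wcls i = B.W := by
  refine le_antisymm (iSup_le fun i => ?_) ?_
  · rw [← B.e_span]
    exact Submodule.span_mono (Set.image_subset_range _ _)
  · rw [← B.e_span, Submodule.span_le]
    rintro _ ⟨i, rfl⟩
    exact Submodule.mem_iSup_of_mem i (Submodule.subset_span ⟨i, B.connected_equivalence.refl i, rfl⟩)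

theorem disjoint_Wcls_iSup_Wcls (i : I) :
    Disjoint (B.Wcls i) (⨆ j ∈ {j : I | ¬ B.Connected i j}, B.Wcls j) := by
  simp only [Wcls, ← Submodule.span_iUnion₂, ← Set.image_iUnion₂]
  refine B.e_indep.disjoint_span_image (Set.disjoint_left.2 fun k hik hk => ?_)
  obtain ⟨j, hij, hjk⟩ := Set.mem_iUnion₂.1 hk
  exact hij (B.connected_equivalence.trans hik (B.connected_equivalence.symm hjk))

theorem W_eq_top (hV : B.V = ⊥) : B.W = ⊤ := by
  simpa [hV] using B.compl.sup_eq_top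

theorem Jcls_eq_Wcls (hV : B.V = ⊥) (i : I) : B.Jcls i = B.Wcls i := by
  simp [Jcls, Vcls, hV]

theorem bracket_mem_Wcls (hV : B.V = ⊥) {i : I} (c : Fin (n + 2) → I) (t₀ : Fin (n + 2))
    (hc : c t₀ ∈ B.cls i) : A.bracket (fun t => B.e (c t)) ∈ B.Wcls i := by
  rcases B.qm1 c with ⟨j, hj⟩ | hzero
  · by_cases h0 : A.bracket (fun t => B.e (c t)) = 0
    · simp [h0]
    have haMem : B.aMem 1 (fun t => some (c t)) (some j) := by
      refine ⟨⟨_, fun t => rfl, h0⟩, fun z hz => ?_, by simp⟩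
      obtain rfl : z = fun t => B.e (c t) := funext hz
      exact hj
    have hij : j ∈ B.cls i :=
      B.connected_equivalence.trans hc
        (B.connected_iff_reflTransGen.2 (.single (B.adjacent_of_aMem haMem rfl)))
    exact Submodule.span_mono (Set.singleton_subset_iff.2 (Set.mem_image_of_mem B.e hij)) hj
  · rw [hV, Submodule.mem_bot] at hzero
    simp [hzero]

theorem isIdeal_Wcls (hV : B.V = ⊥) (i : I) : A.IsIdeal (B.Wcls i) := by
  refine ⟨Submodule.span_eq_iSup_inf_of_forall_exists_mem _ ?_, fun σ x hx => ?_⟩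
  · rintro _ ⟨j, -, rfl⟩
    exact ⟨B.deg j, B.e_homog j⟩
  let S : Fin (n + 2) → Set I := fun t => if σ t = 0 then B.cls i else Set.univ
  refine A.bracket.map_mem_of_forall_mem_span (s := fun t => B.e '' S t) (fun z hz => ?_)
    (fun t => ?_)
  · choose c hcS hcz using hz
    have h0 : c (σ.symm 0) ∈ B.cls i := by simpa [S] using hcS (σ.symm 0)
    obtain rfl : (fun t => B.e (c t)) = z := funext hcz
    exact B.bracket_mem_Wcls hV c _ h0
  · by_cases ht : σ t = 0
    · simp only [S, ht, if_true]
      exact hx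
    · simp [S, ht, B.e_span, B.W_eq_top hV]

end QMBasis

theorem stmt9 {F : Type} [Field F] {G : Type} [AddCommGroup G] [DecidableEq G]
    {L : Type} [AddCommGroup L] [Module F L] {n : ℕ} {I : Type}
    {A : ColorGLT F G L n} (B : QMBasis A I) (hV : B.V = ⊥) :
    (⨆ i : I, B.Jcls i) = ⊤ ∧
    (∀ i : I, Disjoint (B.Jcls i) (⨆ j ∈ {j : I | ¬ B.Connected i j}, B.Jcls j)) ∧
    (∀ i : I, A.IsIdeal (B.Jcls i)) ∧
    (∀ i : I, ∃ J' : Set I, J'.Nonempty ∧ B.Jcls i = Submodule.span F (B.e '' J')) := by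
  simp only [B.Jcls_eq_Wcls hV]
  refine ⟨by rw [B.iSup_Wcls, B.W_eq_top hV], B.disjoint_Wcls_iSup_Wcls, B.isIdeal_Wcls hV,
    fun i => ⟨B.cls i, ⟨i, B.connected_equivalence.refl i⟩, rfl⟩⟩
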